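/- arXiv:1311.0160 — 3 statements merged into one kernel-verified Lean document; each statement's English description precedes it below -/
import Mathlib

section
/- With Y_v = X_v μ(C_v) where C_v is the cylinder of the finite word v, for every finite word w and every level l ≥ |w|, the sum over words v of length l extending w of E(Y_v | F_{|w|}) equals Y_w almost surely. -/
/-! Split `X_{w ++ u} = X_w · Z`, where `Z` is the product of the weights at the prefixes of
`w ++ u` longer than `w`. The factor `X_w` is `F_{|w|}`-measurable, while `Z` is a product of
distinct weights indexed by words longer than `|w|`, hence integrable, of mean one and independent
of `F_{|w|}`. So `E(Y_{w ++ u} | F_{|w|}) = μ(C_{w ++ u}) X_w`, and summing over the extensions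
`u` of length `l - |w|` gives `μ(C_w) X_w = Y_w`, because their cylinders partition `C_w`. -/

open MeasureTheory ProbabilityTheory

/-- The product of the weights along the prefixes of the word `v`. -/
noncomputable def cascadeX {m : ℕ} {Ω : Type*} (W : List (Fin m) → Ω → ℝ)
    (v : List (Fin m)) (ω : Ω) : ℝ :=
  ∏ l ∈ Finset.range v.length, W (v.take (l + 1)) ω

/-- The σ-algebra `F_k` generated by the weights indexed by words of length at most `k`. -/
def cascadeF {m : ℕ} {Ω : Type*} [MeasurableSpace Ω] (W : List (Fin m) → Ω → ℝ)
    (k : ℕ) : MeasurableSpace Ω :=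
  ⨆ (i : List (Fin m)) (_ : i.length ≤ k), MeasurableSpace.comap (W i) inferInstance

/-- The cylinder `C_v` of the finite word `v`: all infinite words extending `v`. -/
def cyl {m : ℕ} (v : List (Fin m)) : Set (ℕ → Fin m) :=
  {j | ∀ l, ∀ h : l < v.length, j l = v.get ⟨l, h⟩}

/-- `Y_v = X_v μ(C_v)`. -/
noncomputable def cascadeY {m : ℕ} {Ω : Type*} (W : List (Fin m) → Ω → ℝ)
    (μ : Measure (ℕ → Fin m)) (v : List (Fin m)) (ω : Ω) : ℝ :=
  cascadeX W v ω * (μ (cyl v)).toReal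

namespace ProbabilityTheory

variable {ι Ω : Type*} [mΩ : MeasurableSpace Ω] {P : Measure Ω} {W : ι → Ω → ℝ}

lemma iIndepFun.integrable_finset_prod (hW : iIndepFun W P) (hint : ∀ i, Integrable (W i) P)
    (s : Finset ι) : Integrable (∏ i ∈ s, W i) P := by
  classical
  have := hW.isProbabilityMeasure
  induction s using Finset.induction with
  | empty => exact integrable_const (1 : ℝ)
  | insert a s ha ih =>
    rw [Finset.prod_insert ha, mul_comm]
    exact (hW.indepFun_finsetProd_of_notMem₀ (fun i => (hint i).aemeasurable) ha).integrable_mul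
      ih (hint a)

lemma iIndepFun.integral_finset_prod (hW : iIndepFun W P) (hint : ∀ i, Integrable (W i) P)
    (s : Finset ι) : ∫ ω, (∏ i ∈ s, W i) ω ∂P = ∏ i ∈ s, ∫ ω, W i ω ∂P := by
  classical
  have := hW.isProbabilityMeasure
  induction s using Finset.induction with
  | empty => simp
  | insert a s ha ih =>
    rw [Finset.prod_insert ha, Finset.prod_insert ha, mul_comm (W a),
      mul_comm (∫ ω, W a ω ∂P), ← ih]
    exact (hW.indepFun_finsetProd_of_notMem₀ (fun i => (hint i).aemeasurable) ha
      ).integral_mul_eq_mul_integral (hW.integrable_finset_prod hint s).aestronglyMeasurable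
      (hint a).aestronglyMeasurable

omit mΩ in
lemma measurable_iSup_comap {β : Type*} [mβ : MeasurableSpace β] (f : ι → Ω → β)
    {S : Set ι} {i : ι} (hi : i ∈ S) : Measurable[⨆ j ∈ S, mβ.comap (f j)] (f i) :=
  measurable_iff_comap_le.2 <| le_iSup₂ (f := fun j (_ : j ∈ S) => mβ.comap (f j)) i hi

lemma condExp_mul_eq_mul_integral_of_indep {m₁ m₂ : MeasurableSpace Ω} [IsFiniteMeasure P]
    (hle₁ : m₁ ≤ mΩ) (hle₂ : m₂ ≤ mΩ) (hind : Indep m₁ m₂ P)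
    {X Z : Ω → ℝ} (hX : StronglyMeasurable[m₁] X) (hZ : StronglyMeasurable[m₂] Z)
    (hXint : Integrable X P) (hZint : Integrable Z P) :
    P[X * Z|m₁] =ᵐ[P] fun ω => X ω * ∫ ω', Z ω' ∂P := by
  have hXZ : IndepFun X Z P := (IndepFun_iff_Indep X Z P).2 <|
    indep_of_indep_of_le_right (indep_of_indep_of_le_left hind hX.measurable.comap_le)
      hZ.measurable.comap_le
  filter_upwards [condExp_mul_of_stronglyMeasurable_left hX (hXZ.integrable_mul hXint hZint) hZint,
    condExp_indep_eq hle₂ hle₁ hZ hind.symm] with ω hmul hconst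
  rw [hmul, Pi.mul_apply, hconst]

lemma iIndepFun.condExp_mul_eq_mul_integral (hW : iIndepFun W P) (hmeas : ∀ i, Measurable (W i))
    {S T : Set ι} (hST : Disjoint S T) {X Z : Ω → ℝ}
    (hX : StronglyMeasurable[⨆ i ∈ T, MeasurableSpace.comap (W i) inferInstance] X)
    (hZ : StronglyMeasurable[⨆ i ∈ S, MeasurableSpace.comap (W i) inferInstance] Z)
    (hXint : Integrable X P) (hZint : Integrable Z P) :
    P[X * Z|⨆ i ∈ T, MeasurableSpace.comap (W i) inferInstance]
      =ᵐ[P] fun ω => X ω * ∫ ω', Z ω' ∂P :=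
  have := hW.isProbabilityMeasure
  condExp_mul_eq_mul_integral_of_indep (iSup₂_le fun i _ => (hmeas i).comap_le)
    (iSup₂_le fun i _ => (hmeas i).comap_le)
    (indep_iSup_of_disjoint (fun i => (hmeas i).comap_le) hW hST.symm) hX hZ hXint hZint

end ProbabilityTheory

section Words

variable {α β : Type*} [CommMonoid β]

lemma List.prod_take_Ioc_eq_prod_image [DecidableEq α] (f : List α → β) (v : List α)
    {a b : ℕ} (hb : b ≤ v.length) :
    ∏ k ∈ Finset.Ioc a b, f (v.take k) = ∏ u ∈ (Finset.Ioc a b).image v.take, f u := by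
  refine (Finset.prod_image fun k hk k' hk' h => ?_).symm
  have := congrArg List.length h
  simp only [Finset.coe_Ioc, Set.mem_Ioc, List.length_take] at hk hk' this
  omega

end Words

section Cascade

variable {m : ℕ} {Ω : Type*} {W : List (Fin m) → Ω → ℝ}

lemma cascadeX_eq_prod_Ioc (v : List (Fin m)) :
    cascadeX W v = ∏ k ∈ Finset.Ioc 0 v.length, W (v.take k) := by
  ext ω
  rw [cascadeX, Finset.prod_apply, Finset.range_eq_Ico, ← Finset.Ico_add_one_add_one_eq_Ioc,
    ← Finset.prod_Ico_add' (fun k => W (v.take k) ω)]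

lemma cascadeX_append (w u : List (Fin m)) :
    cascadeX W (w ++ u) =
      cascadeX W w * ∏ k ∈ Finset.Ioc w.length (w ++ u).length, W ((w ++ u).take k) := by
  rw [cascadeX_eq_prod_Ioc, cascadeX_eq_prod_Ioc,
    ← Finset.prod_Ioc_consecutive _ (Nat.zero_le w.length)
      (by simp : w.length ≤ (w ++ u).length)]
  congr 1
  refine Finset.prod_congr rfl fun k hk => ?_
  rw [List.take_append_of_le_length (Finset.mem_Ioc.1 hk).2]

lemma cascadeY_eq_smul (μ : Measure (ℕ → Fin m)) (v : List (Fin m)) :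
    cascadeY W μ v = μ.real (cyl v) • cascadeX W v :=
  funext fun _ => mul_comm _ _

variable [MeasurableSpace Ω]

lemma measurable_cascadeF {k : ℕ} {i : List (Fin m)} (hi : i.length ≤ k) :
    Measurable[cascadeF W k] (W i) :=
  measurable_iSup_comap W (S := {j | j.length ≤ k}) hi

variable {P : Measure Ω} (hWmeas : ∀ v, Measurable (W v)) (hWint : ∀ v, Integrable (W v) P)
  (hWmean : ∀ v, ∫ ω, W v ω ∂P = 1) (hindep : iIndepFun W P)
include hWmeas hWint hWmean hindep

lemma condExp_cascadeX_append (w u : List (Fin m)) :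
    P[cascadeX W (w ++ u)|cascadeF W w.length] =ᵐ[P] cascadeX W w := by
  rw [cascadeX_append]
  set Z := ∏ k ∈ Finset.Ioc w.length (w ++ u).length, W ((w ++ u).take k) with hZdef
  have hXmeas : StronglyMeasurable[cascadeF W w.length] (cascadeX W w) := by
    rw [cascadeX_eq_prod_Ioc]
    exact Finset.stronglyMeasurable_prod _ fun k _ =>
      (measurable_cascadeF (List.length_take_le' k w)).stronglyMeasurable
  have hZmeas : StronglyMeasurable[⨆ i ∈ {i : List (Fin m) | w.length < i.length},
      MeasurableSpace.comap (W i) (inferInstance : MeasurableSpace ℝ)] Z := by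
    rw [hZdef]
    refine Finset.stronglyMeasurable_prod _ fun k hk =>
      (measurable_iSup_comap W ?_).stronglyMeasurable
    rw [Finset.mem_Ioc] at hk
    rw [Set.mem_ofPred_eq, List.length_take]
    omega
  have hXint : Integrable (cascadeX W w) P := by
    rw [cascadeX_eq_prod_Ioc, List.prod_take_Ioc_eq_prod_image _ _ le_rfl]
    exact hindep.integrable_finset_prod hWint _
  have hZ : Z = ∏ v ∈ (Finset.Ioc w.length (w ++ u).length).image (w ++ u).take, W v :=
    List.prod_take_Ioc_eq_prod_image _ _ le_rfl
  have hZint : Integrable Z P := hZ ▸ hindep.integrable_finset_prod hWint _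
  have hZmean : ∫ ω, Z ω ∂P = 1 := by
    rw [hZ, hindep.integral_finset_prod hWint]
    simp [hWmean]
  filter_upwards [hindep.condExp_mul_eq_mul_integral hWmeas (T := {i | i.length ≤ w.length})
    (Set.disjoint_left.2 fun _ (hi : w.length < _) hi' => hi'.not_gt hi)
    hXmeas hZmeas hXint hZint] with ω hω
  refine hω.trans ?_
  rw [hZmean, mul_one]

lemma condExp_cascadeY_append (μ : Measure (ℕ → Fin m)) (w u : List (Fin m)) :
    P[cascadeY W μ (w ++ u)|cascadeF W w.length]
      =ᵐ[P] μ.real (cyl (w ++ u)) • cascadeX W w := by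
  rw [cascadeY_eq_smul]
  exact (condExp_smul _ _ _).trans
    ((condExp_cascadeX_append hWmeas hWint hWmean hindep w u).const_smul _)

end Cascade

section Cylinder

variable {m : ℕ}

lemma cyl_append_ofFn (w : List (Fin m)) {n : ℕ} (f : Fin n → Fin m) :
    cyl (w ++ List.ofFn f) = (fun j (i : Fin n) => j (w.length + i)) ⁻¹' {f} ∩ cyl w := by
  ext j
  simp only [cyl, Set.mem_inter_iff, Set.mem_preimage, Set.mem_singleton_iff, Set.mem_ofPred_eq,
    funext_iff, List.get_eq_getElem, List.length_append, List.length_ofFn]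
  constructor
  · intro h
    refine ⟨fun i => ?_, fun l hl => ?_⟩
    · simpa using h (w.length + i) (by omega)
    · simpa [List.getElem_append_left hl] using h l (by omega)
  · rintro ⟨hf, hw⟩ l hl
    rcases lt_or_ge l w.length with hlw | hlw
    · rw [List.getElem_append_left hlw]
      exact hw l hlw
    · obtain ⟨i, rfl⟩ := Nat.exists_eq_add_of_le hlw
      simpa using hf ⟨i, by omega⟩

lemma sum_measureReal_cyl_append_ofFn (μ : Measure (ℕ → Fin m)) [IsFiniteMeasure μ]
    (w : List (Fin m)) (n : ℕ) :
    ∑ f : Fin n → Fin m, μ.real (cyl (w ++ List.ofFn f)) = μ.real (cyl w) := by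
  have hg : Measurable fun (j : ℕ → Fin m) (i : Fin n) => j (w.length + i) := by fun_prop
  simp_rw [cyl_append_ofFn, ← measureReal_restrict_apply (hg (measurableSet_singleton _))]
  rw [sum_measureReal_preimage_singleton _ fun f _ => hg (measurableSet_singleton f),
    Finset.coe_univ, Set.preimage_univ, measureReal_restrict_apply MeasurableSet.univ,
    Set.univ_inter]

end Cylinder

theorem stmt_5_general {m : ℕ} {Ω : Type*} [MeasurableSpace Ω]
    (P : Measure Ω)
    (W : List (Fin m) → Ω → ℝ)
    (hWmeas : ∀ v, Measurable (W v))
    (hWint : ∀ v, Integrable (W v) P)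
    (hWmean : ∀ v, ∫ ω, W v ω ∂P = 1)
    (hindep : iIndepFun W P)
    (μ : Measure (ℕ → Fin m)) [IsProbabilityMeasure μ]
    (w : List (Fin m)) (l : ℕ) :
    ∀ᵐ ω ∂P,
      ∑ f : Fin (l - w.length) → Fin m,
        (P[cascadeY W μ (w ++ List.ofFn f)|cascadeF W w.length]) ω
      = cascadeY W μ w ω := by
  filter_upwards [ae_all_iff.2 fun f : Fin (l - w.length) → Fin m =>
    condExp_cascadeY_append hWmeas hWint hWmean hindep μ w (List.ofFn f)] with ω hω
  rw [Finset.sum_congr rfl fun f _ => hω f, cascadeY_eq_smul]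
  simp only [Pi.smul_apply, smul_eq_mul, ← Finset.sum_mul, sum_measureReal_cyl_append_ofFn]

/-- With `Y_v = X_v μ(C_v)`, for every finite word `w` and every level `l ≥ |w|`,
`∑_{|v|=l, v ⪰ w} E(Y_v | F_{|w|}) = Y_w` almost surely. -/
theorem stmt_5 {m : ℕ} (hm : 2 ≤ m) {Ω : Type*} [MeasurableSpace Ω]
    (P : Measure Ω) [IsProbabilityMeasure P]
    (W : List (Fin m) → Ω → ℝ)
    (hWmeas : ∀ v, Measurable (W v))
    (hWpos : ∀ v ω, 0 < W v ω)
    (hWint : ∀ v, Integrable (W v) P)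
    (hWmean : ∀ v, ∫ ω, W v ω ∂P = 1)
    (hindep : iIndepFun W P)
    (μ : Measure (ℕ → Fin m)) [IsProbabilityMeasure μ]
    (w : List (Fin m)) (l : ℕ) (hl : w.length ≤ l) :
    ∀ᵐ ω ∂P,
      ∑ f : Fin (l - w.length) → Fin m,
        (P[cascadeY W μ (w ++ List.ofFn f)|cascadeF W w.length]) ω
      = cascadeY W μ w ω :=
  stmt_5_general P W hWmeas hWint hWmean hindep μ w l
end

section
/- In the multiplicative cascade setup with Y_v = X_v μ(C_v), if the sequence μ_k(I_∞) = Σ_{|i|=k} Y_i is L^q-bounded for some q > 1, then limsup_{k→∞} (Σ_{|i|=k} E(Y_i^q))^{1/k} ≤ 1. -/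
/-!
For `q ≥ 1` the map `t ↦ t ^ q` is superadditive on `[0, ∞)`, so pointwise
`∑_{|i|=k} Y_i ^ q ≤ (∑_{|i|=k} Y_i) ^ q`; integrating, `∑_{|i|=k} E(Y_i ^ q)` is bounded by the
uniform `L^q` bound `C < ∞`, and `C ^ (1/k) → 1`.
-/

open MeasureTheory ProbabilityTheory

open Filter ENNReal

theorem Real.sum_rpow_le_rpow_sum {ι : Type*} (s : Finset ι) {f : ι → ℝ}
    (hf : ∀ i ∈ s, 0 ≤ f i) {p : ℝ} (hp : 1 ≤ p) :
    ∑ i ∈ s, f i ^ p ≤ (∑ i ∈ s, f i) ^ p := by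
  induction s using Finset.cons_induction with
  | empty => simp [Real.zero_rpow (by linarith : p ≠ 0)]
  | cons a s _ ih =>
    rw [Finset.forall_mem_cons] at hf
    rw [Finset.sum_cons, Finset.sum_cons]
    calc f a ^ p + ∑ i ∈ s, f i ^ p ≤ f a ^ p + (∑ i ∈ s, f i) ^ p := by gcongr; exact ih hf.2
      _ ≤ (f a + ∑ i ∈ s, f i) ^ p :=
        Real.add_rpow_le_rpow_add hf.1 (Finset.sum_nonneg hf.2) hp

theorem MeasureTheory.le_lintegral_finsetSum {α β : Type*} [MeasurableSpace α] (μ : Measure α)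
    (s : Finset β) (f : β → α → ℝ≥0∞) :
    ∑ b ∈ s, ∫⁻ a, f b a ∂μ ≤ ∫⁻ a, ∑ b ∈ s, f b a ∂μ := by
  induction s using Finset.cons_induction with
  | empty => simp
  | cons b s _ ih =>
    simp only [Finset.sum_cons]
    exact (add_le_add_right ih _).trans (le_lintegral_add _ _)

theorem MeasureTheory.sum_lintegral_ofReal_rpow_le {α ι : Type*} [MeasurableSpace α]
    (μ : Measure α) (s : Finset ι) {f : ι → α → ℝ} (hf : ∀ i ∈ s, ∀ x, 0 ≤ f i x)
    {p : ℝ} (hp : 1 ≤ p) :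
    ∑ i ∈ s, ∫⁻ x, ENNReal.ofReal (f i x ^ p) ∂μ
      ≤ ∫⁻ x, ENNReal.ofReal ((∑ i ∈ s, f i x) ^ p) ∂μ := by
  refine (le_lintegral_finsetSum μ s _).trans (lintegral_mono fun x => ?_)
  rw [← ENNReal.ofReal_sum_of_nonneg fun i hi => Real.rpow_nonneg (hf i hi x) p]
  exact ENNReal.ofReal_le_ofReal (Real.sum_rpow_le_rpow_sum s (fun i hi => hf i hi x) hp)

theorem ENNReal.limsup_rpow_one_div_le_one {a : ℕ → ℝ≥0∞} {C : ℝ≥0∞} (hC : C ≠ ∞)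
    (ha : ∀ k, a k ≤ C) :
    limsup (fun k : ℕ => a k ^ (1 / (k : ℝ))) atTop ≤ 1 := by
  refine le_of_forall_gt_imp_ge_of_dense fun y hy => limsup_le_of_le (by isBoundedDefault) ?_
  filter_upwards [ENNReal.eventually_pow_one_div_le hC hy] with k hk
  exact (ENNReal.rpow_le_rpow (ha k) (by positivity)).trans hk

theorem cascadeY_nonneg {m : ℕ} {Ω : Type*} {W : List (Fin m) → Ω → ℝ}
    (hW : ∀ v ω, 0 ≤ W v ω) (μ : Measure (ℕ → Fin m)) (v : List (Fin m)) (ω : Ω) :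
    0 ≤ cascadeY W μ v ω :=
  mul_nonneg (Finset.prod_nonneg fun _ _ => hW _ ω) ENNReal.toReal_nonneg

open Filter ENNReal in
theorem stmt_6_general {m : ℕ} {Ω : Type*} [MeasurableSpace Ω]
    (P : Measure Ω)
    (W : List (Fin m) → Ω → ℝ)
    (hWpos : ∀ v ω, 0 < W v ω)
    (μ : Measure (ℕ → Fin m))
    (q : ℝ) (hq : 1 < q)
    (hbdd : ∃ C : ℝ≥0∞, C < ⊤ ∧ ∀ k : ℕ,
      ∫⁻ ω, ENNReal.ofReal ((∑ f : Fin k → Fin m, cascadeY W μ (List.ofFn f) ω) ^ q) ∂P ≤ C) :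
    Filter.limsup
      (fun k : ℕ =>
        (∑ f : Fin k → Fin m,
            ∫⁻ ω, ENNReal.ofReal (cascadeY W μ (List.ofFn f) ω ^ q) ∂P) ^ (1 / (k : ℝ)))
      Filter.atTop ≤ 1 := by
  obtain ⟨C, hC, hbound⟩ := hbdd
  have hY : ∀ v ω, 0 ≤ cascadeY W μ v ω := cascadeY_nonneg (fun v ω => (hWpos v ω).le) μ
  refine ENNReal.limsup_rpow_one_div_le_one hC.ne fun k => ?_
  exact (sum_lintegral_ofReal_rpow_le P _ (fun f _ => hY (List.ofFn f)) hq.le).trans (hbound k)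

open Filter ENNReal in
/-- If `μ_k(I_∞) = ∑_{|i|=k} Y_i` is `L^q`-bounded for some `q > 1`, then
`limsup_k (∑_{|i|=k} E(Y_i^q))^{1/k} ≤ 1`. -/
theorem stmt_6 {m : ℕ} (hm : 2 ≤ m) {Ω : Type*} [MeasurableSpace Ω]
    (P : Measure Ω) [IsProbabilityMeasure P]
    (W : List (Fin m) → Ω → ℝ)
    (hWmeas : ∀ v, Measurable (W v))
    (hWpos : ∀ v ω, 0 < W v ω)
    (hWint : ∀ v, Integrable (W v) P)
    (hWmean : ∀ v, ∫ ω, W v ω ∂P = 1)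
    (hindep : iIndepFun W P)
    (μ : Measure (ℕ → Fin m)) [IsProbabilityMeasure μ]
    (q : ℝ) (hq : 1 < q)
    (hbdd : ∃ C : ℝ≥0∞, C < ⊤ ∧ ∀ k : ℕ,
      ∫⁻ ω, ENNReal.ofReal ((∑ f : Fin k → Fin m, cascadeY W μ (List.ofFn f) ω) ^ q) ∂P ≤ C) :
    Filter.limsup
      (fun k : ℕ =>
        (∑ f : Fin k → Fin m,
            ∫⁻ ω, ENNReal.ofReal (cascadeY W μ (List.ofFn f) ω ^ q) ∂P) ^ (1 / (k : ℝ)))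
      Filter.atTop ≤ 1 :=
  stmt_6_general P W hWpos μ q hq hbdd
end

section
/- Fix n ≥ 1 and 0 < λ < 1. Then Σ over all 0 ≤ l₁ ≤ ⋯ ≤ l_{n−1} ≤ k of N(l₁,…,l_{n−1}) λ^{l₁+⋯+l_{n−1}} is bounded above by (n−1)! Σ_{r=0}^∞ (r+1)^{n−2} λ^r, a finite bound independent of k. -/
/-- The length of the longest common prefix of two leaves (depth-`k` words). -/
def meetLen {m k : ℕ} (i j : Fin k → Fin m) : ℕ :=
  (Finset.univ.filter fun t : Fin k => ∀ s ≤ t, i s = j s).card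

/-- The number of distinct length-`l` prefixes among the leaves of the tuple `J`. -/
def prefixCount {m k n : ℕ} (J : Fin n → Fin k → Fin m) (l : ℕ) : ℕ :=
  (Finset.univ.image fun r : Fin n => (List.ofFn (J r)).take l).card

/-- The multiplicity of level `l` in the multiset of join levels of the tuple `J`:
the pairwise meets of the leaves of `J`, counted with multiplicity (a vertex where `r+1`
branches of the spanning subtree separate counts `r` times, and a leaf repeated `r+1`
times counts `r` times). -/
def joinMult {m k n : ℕ} (J : Fin n → Fin k → Fin m) (l : ℕ) : ℕ :=
  if l < k then prefixCount J (l + 1) - prefixCount J l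
  else if l = k then n - prefixCount J k
  else 0

/-- A bijection of the leaves of the depth-`k` `m`-ary tree preserving all meets;
these are exactly the restrictions to leaves of automorphisms of the rooted tree. -/
def IsLeafAut {m k : ℕ} (g : (Fin k → Fin m) → (Fin k → Fin m)) : Prop :=
  Function.Bijective g ∧ ∀ i j, meetLen (g i) (g j) = meetLen i j

/-- The (leaf map of an) automorphism fixes the vertex `v` iff it maps leaves
below `v` to leaves below `v`. -/
def FixesVertex {m k : ℕ} (g : (Fin k → Fin m) → (Fin k → Fin m)) (v : List (Fin m)) : Prop :=
  ∀ i : Fin k → Fin m, v <+: List.ofFn i → v <+: List.ofFn (g i)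

/-- The orbit of an `n`-tuple of leaves under the automorphisms of the depth-`k`
tree fixing the vertex `v`. -/
def orbitV {m k n : ℕ} (v : List (Fin m)) (J : Fin n → Fin k → Fin m) :
    Set (Fin n → Fin k → Fin m) :=
  {I | ∃ g, IsLeafAut g ∧ FixesVertex g v ∧ ∀ r, g (J r) = I r}

/-- The vertex set of the minimal subtree rooted at `v` containing the leaves of `J`. -/
def spanningTree {m k n : ℕ} (v : List (Fin m)) (J : Fin n → Fin k → Fin m) :
    Set (List (Fin m)) :=
  {w | v <+: w ∧ ∃ r, w <+: List.ofFn (J r)}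

/-- `p` is the deepest prefix of the leaf `j` lying in the minimal subtree
`T_v(J)`, i.e. `j ∧ T_v(J) = p`. -/
def meetsTreeAt {m k n : ℕ} (v : List (Fin m)) (J : Fin n → Fin k → Fin m)
    (j : Fin k → Fin m) (p : List (Fin m)) : Prop :=
  p ∈ spanningTree v J ∧ p <+: List.ofFn j ∧
    ∀ w ∈ spanningTree v J, w <+: List.ofFn j → w.length ≤ p.length

/-- The vertices of the minimal rooted subtree containing the leaves of `J`,
as a finset (all prefixes of the leaves of `J` extending `v`). -/
def treeFinset {m k n : ℕ} (v : List (Fin m)) (J : Fin n → Fin k → Fin m) :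
    Finset (List (Fin m)) :=
  (Finset.univ.image fun rl : Fin n × Fin (k + 1) =>
    (List.ofFn (J rl.1)).take rl.2).filter fun w => v <+: w

/-- The orbit of a marked tuple `(J; q₀)` (an `n`-tuple of leaves together with a vertex
of its spanning subtree) under the automorphisms of the depth-`k` tree fixing `v`;
the action on the mark is the one induced by the action on the leaves. -/
def orbitVMarked {m k n : ℕ} (v : List (Fin m)) (J : Fin n → Fin k → Fin m)
    (q₀ : List (Fin m)) : Set ((Fin n → Fin k → Fin m) × List (Fin m)) :=
  {Ip | ∃ g, IsLeafAut g ∧ FixesVertex g v ∧ (∀ r, g (J r) = Ip.1 r) ∧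
    ∀ r, q₀ <+: List.ofFn (J r) → Ip.2 = (List.ofFn (Ip.1 r)).take q₀.length}

/-- The number of root-fixing-automorphism classes of `n`-tuples of leaves of the depth-`k`
`m`-ary tree with join levels `l₁ ≤ ⋯ ≤ l_{n−1}`. -/
noncomputable def numClasses (m k n : ℕ) (l : Fin (n - 1) → ℕ) : ℕ :=
  Set.ncard {C : Set (Fin n → Fin k → Fin m) |
    ∃ J : Fin n → Fin k → Fin m, C = orbitV ([] : List (Fin m)) J ∧
      ∀ a : ℕ, joinMult J a = (Finset.univ.filter fun t : Fin (n - 1) => l t = a).card}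

/-!
Encode a tuple `J` of leaves by recording, for each leaf after the first, the deepest level
`a s` at which it meets an earlier leaf, together with an earlier leaf `ρ s` realising it. The
ultrametric inequality `min (i ∧ j) (j ∧ l) ≤ i ∧ l` recovers every pairwise meet from `(ρ, a)`, and
two tuples with the same meets are related by a tree automorphism (permute the children of each
vertex), so a class is determined by `(ρ, a)`. Since the number of distinct length-`w` prefixes is
`1 + #{s | a s < w}`, the values of `a` are exactly the join levels. There are `(n-1)!` choices
of `ρ`, and at most `(r+1)^(n-2)` vectors `a` with sum `r`.
-/

open Finset
open scoped Nat

section MeetLen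
variable {m k : ℕ} {i j : Fin k → Fin m}

lemma meetLen_le (i j : Fin k → Fin m) : meetLen i j ≤ k :=
  (card_filter_le _ _).trans (card_univ.trans (Fintype.card_fin k)).le

lemma le_meetLen_iff {v : ℕ} (hv : v ≤ k) :
    v ≤ meetLen i j ↔ ∀ s : Fin k, (s : ℕ) < v → i s = j s := by
  constructor
  · intro h s hs
    by_contra hne
    have hsub : (univ.filter fun t : Fin k => ∀ s ≤ t, i s = j s) ⊆ Iio s := fun t ht => by
      simp only [mem_filter, mem_univ, true_and] at ht
      exact mem_Iio.2 (lt_of_not_ge fun hst => hne (ht s hst))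
    have := (card_le_card hsub).trans_eq (Fin.card_Iio s)
    exact absurd (h.trans this) (by omega)
  · intro h
    have hsub : (univ.filter fun t : Fin k => (t : ℕ) < v) ⊆
        univ.filter fun t : Fin k => ∀ s ≤ t, i s = j s := fun t ht => by
      simp only [mem_filter, mem_univ, true_and] at ht ⊢
      exact fun s hs => h s (lt_of_le_of_lt (Fin.le_def.1 hs) ht)
    have := card_le_card hsub
    rwa [Fin.card_filter_val_lt, min_eq_right hv] at this

lemma succ_le_meetLen_iff (t : Fin k) :
    (t : ℕ) + 1 ≤ meetLen i j ↔ (t : ℕ) ≤ meetLen i j ∧ i t = j t := by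
  rw [le_meetLen_iff t.isLt, le_meetLen_iff t.isLt.le]
  constructor
  · exact fun h => ⟨fun s hs => h s (by omega), h t (by omega)⟩
  · rintro ⟨hlt, heq⟩ s hs
    rcases Nat.lt_succ_iff_lt_or_eq.1 hs with hs | hs
    · exact hlt s hs
    · rwa [Fin.ext hs]

lemma meetLen_eq_iff : meetLen i j = k ↔ i = j := by
  rw [le_antisymm_iff, and_iff_right (meetLen_le i j), le_meetLen_iff le_rfl, funext_iff]
  exact ⟨fun h s => h s s.isLt, fun h s _ => h s⟩

lemma meetLen_self (i : Fin k → Fin m) : meetLen i i = k :=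
  meetLen_eq_iff.2 rfl

lemma meetLen_comm (i j : Fin k → Fin m) : meetLen i j = meetLen j i := by
  simp only [meetLen, eq_comm (a := i _)]

lemma min_le_meetLen (i j l : Fin k → Fin m) :
    min (meetLen i j) (meetLen j l) ≤ meetLen i l := by
  have hle : min (meetLen i j) (meetLen j l) ≤ k := (min_le_left _ _).trans (meetLen_le i j)
  rw [le_meetLen_iff hle]
  intro s hs
  rw [lt_min_iff] at hs
  exact ((le_meetLen_iff (meetLen_le i j)).1 le_rfl s hs.1).trans
    ((le_meetLen_iff (meetLen_le j l)).1 le_rfl s hs.2)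

lemma take_ofFn_eq_iff {v : ℕ} (hv : v ≤ k) :
    (List.ofFn i).take v = (List.ofFn j).take v ↔ v ≤ meetLen i j := by
  rw [le_meetLen_iff hv, List.ext_get_iff]
  simp only [List.length_take, List.length_ofFn, List.get_eq_getElem, List.getElem_take,
    List.getElem_ofFn, true_and]
  constructor
  · exact fun h s hs => h s (by omega) (by omega)
  · exact fun h t ht _ => h ⟨t, by omega⟩ (by simp only; omega)

end MeetLen

lemma Equiv.Perm.exists_apply_eq_of_eq_iff {ι α : Type*} [Fintype α] (a b : ι → α)
    (h : ∀ i j, a i = a j ↔ b i = b j) : ∃ σ : Equiv.Perm α, ∀ i, σ (a i) = b i := by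
  classical
  let e : Set.range a ≃ Set.range b :=
    (Setoid.quotientKerEquivRange a).symm.trans
      ((Quotient.congrRight h).trans (Setoid.quotientKerEquivRange b))
  refine ⟨e.extendSubtype, fun i => ?_⟩
  rw [Equiv.extendSubtype_apply_of_mem e _ (Set.mem_range_self i)]
  have ha : (Setoid.quotientKerEquivRange a).symm ⟨a i, Set.mem_range_self i⟩ =
      Quotient.mk _ i := (Equiv.symm_apply_eq _).2 rfl
  simp only [e, Equiv.trans_apply, ha]
  rfl

section LeafAut
variable {m k n : ℕ}

/-- The leaf map of the tree automorphism permuting the children of each vertex `w` at depth `t`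
by `σ t w`. -/
def treeMap (σ : Fin k → List (Fin m) → Equiv.Perm (Fin m)) (x : Fin k → Fin m) :
    Fin k → Fin m :=
  fun t => σ t ((List.ofFn x).take t) (x t)

lemma le_meetLen_treeMap_iff (σ : Fin k → List (Fin m) → Equiv.Perm (Fin m))
    (x y : Fin k → Fin m) {v : ℕ} (hv : v ≤ k) :
    v ≤ meetLen (treeMap σ x) (treeMap σ y) ↔ v ≤ meetLen x y := by
  induction v with
  | zero => simp
  | succ v ih =>
    let t : Fin k := ⟨v, hv⟩
    have hv' := Nat.le_of_succ_le hv
    rw [succ_le_meetLen_iff t, succ_le_meetLen_iff t, ih hv', and_congr_right_iff]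
    intro hxy
    simp only [treeMap, (take_ofFn_eq_iff hv').2 hxy, EmbeddingLike.apply_eq_iff_eq, t]

lemma meetLen_treeMap (σ : Fin k → List (Fin m) → Equiv.Perm (Fin m)) (x y : Fin k → Fin m) :
    meetLen (treeMap σ x) (treeMap σ y) = meetLen x y :=
  le_antisymm ((le_meetLen_treeMap_iff σ x y (meetLen_le _ _)).1 le_rfl)
    ((le_meetLen_treeMap_iff σ x y (meetLen_le _ _)).2 le_rfl)

lemma isLeafAut_treeMap (σ : Fin k → List (Fin m) → Equiv.Perm (Fin m)) :
    IsLeafAut (treeMap σ) := by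
  refine ⟨Finite.injective_iff_bijective.1 fun x y hxy => ?_, meetLen_treeMap σ⟩
  rw [← meetLen_eq_iff, ← meetLen_treeMap σ, hxy, meetLen_self]

lemma IsLeafAut.comp {g h : (Fin k → Fin m) → (Fin k → Fin m)} (hg : IsLeafAut g)
    (hh : IsLeafAut h) : IsLeafAut (g ∘ h) :=
  ⟨hg.1.comp hh.1, fun i j => (hg.2 _ _).trans (hh.2 i j)⟩

lemma exists_isLeafAut_of_meetLen_eq {I J : Fin n → Fin k → Fin m}
    (hM : ∀ r s, meetLen (I r) (I s) = meetLen (J r) (J s)) :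
    ∃ g, IsLeafAut g ∧ ∀ r, g (J r) = I r := by
  -- At a vertex `w` of depth `t`, send the children through which the leaves of `J` pass to
  -- those of `I`; this is consistent since `J r`, `J r'` through `w` meet at depth `≥ t`.
  have hperm : ∀ (t : Fin k) (w : List (Fin m)), ∃ σ : Equiv.Perm (Fin m),
      ∀ r : {r // (List.ofFn (J r)).take t = w}, σ (J r t) = I r t := by
    intro t w
    refine Equiv.Perm.exists_apply_eq_of_eq_iff _ _ fun ⟨r, hr⟩ ⟨r', hr'⟩ => ?_
    have hJ : (t : ℕ) ≤ meetLen (J r) (J r') :=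
      (take_ofFn_eq_iff t.isLt.le).1 (hr.trans hr'.symm)
    have hJ' := succ_le_meetLen_iff (i := J r) (j := J r') t
    have hI' := succ_le_meetLen_iff (i := I r) (j := I r') t
    rw [hM r r'] at hI'
    simp only [hJ, true_and] at hJ' hI'
    exact hJ'.symm.trans hI'
  choose σ hσ using hperm
  exact ⟨treeMap σ, isLeafAut_treeMap σ, fun r => funext fun t => hσ t _ ⟨r, rfl⟩⟩

lemma orbitV_nil_subset {I J : Fin n → Fin k → Fin m} {g : (Fin k → Fin m) → (Fin k → Fin m)}
    (hg : IsLeafAut g) (hgI : ∀ r, g (I r) = J r) : orbitV [] J ⊆ orbitV [] I := by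
  rintro x ⟨h, hh, -, hhJ⟩
  exact ⟨h ∘ g, hh.comp hg, fun _ _ => List.nil_prefix, fun r => by simp [hgI, hhJ]⟩

lemma orbitV_nil_eq_of_meetLen_eq {I J : Fin n → Fin k → Fin m}
    (hM : ∀ r s, meetLen (I r) (I s) = meetLen (J r) (J s)) : orbitV [] I = orbitV [] J := by
  obtain ⟨g, hg, hgJ⟩ := exists_isLeafAut_of_meetLen_eq hM
  obtain ⟨g', hg', hg'I⟩ := exists_isLeafAut_of_meetLen_eq fun r s => (hM r s).symm
  exact (orbitV_nil_subset hg hgJ).antisymm (orbitV_nil_subset hg' hg'I)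

end LeafAut

section JoinLevel
variable {m k N : ℕ}

lemma Fin.nonempty_Iio_succ (s : Fin N) : (Iio s.succ).Nonempty :=
  ⟨0, mem_Iio.2 s.succ_pos⟩

/-- The depth at which the leaf `J s.succ` leaves the subtree spanned by the earlier leaves. -/
def joinLevel (J : Fin (N + 1) → Fin k → Fin m) (s : Fin N) : ℕ :=
  (Iio s.succ).sup' s.nonempty_Iio_succ fun r => meetLen (J r) (J s.succ)

noncomputable def joinParent (J : Fin (N + 1) → Fin k → Fin m) (s : Fin N) : Fin (N + 1) :=
  (exists_mem_eq_sup' s.nonempty_Iio_succ fun r => meetLen (J r) (J s.succ)).choose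

lemma joinParent_lt (J : Fin (N + 1) → Fin k → Fin m) (s : Fin N) : joinParent J s < s.succ :=
  mem_Iio.1 (exists_mem_eq_sup' _ _).choose_spec.1

lemma meetLen_joinParent (J : Fin (N + 1) → Fin k → Fin m) (s : Fin N) :
    meetLen (J (joinParent J s)) (J s.succ) = joinLevel J s :=
  (exists_mem_eq_sup' s.nonempty_Iio_succ fun r => meetLen (J r) (J s.succ)).choose_spec.2.symm

lemma meetLen_le_joinLevel (J : Fin (N + 1) → Fin k → Fin m) {r : Fin (N + 1)} {s : Fin N}
    (hr : r < s.succ) : meetLen (J r) (J s.succ) ≤ joinLevel J s :=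
  le_sup' (fun r => meetLen (J r) (J s.succ)) (mem_Iio.2 hr)

lemma joinLevel_le (J : Fin (N + 1) → Fin k → Fin m) (s : Fin N) : joinLevel J s ≤ k := by
  rw [← meetLen_joinParent]
  exact meetLen_le _ _

lemma joinLevel_lt_iff (J : Fin (N + 1) → Fin k → Fin m) (s : Fin N) (v : ℕ) :
    joinLevel J s < v ↔ ∀ r < s.succ, meetLen (J r) (J s.succ) < v :=
  (Finset.sup'_lt_iff _).trans (by simp only [mem_Iio])

lemma meetLen_eq_min_joinLevel (J : Fin (N + 1) → Fin k → Fin m) {r : Fin (N + 1)} {s : Fin N}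
    (hr : r < s.succ) :
    meetLen (J r) (J s.succ) = min (joinLevel J s) (meetLen (J r) (J (joinParent J s))) := by
  have hle := meetLen_le_joinLevel J hr
  have hp := meetLen_joinParent J s
  have h₁ := min_le_meetLen (J r) (J (joinParent J s)) (J s.succ)
  have h₂ := min_le_meetLen (J r) (J s.succ) (J (joinParent J s))
  rw [meetLen_comm (J s.succ)] at h₂
  omega

lemma meetLen_eq_of_joinLevel_eq {I J : Fin (N + 1) → Fin k → Fin m}
    (hl : joinLevel I = joinLevel J) (hp : joinParent I = joinParent J) (p q : Fin (N + 1)) :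
    meetLen (I p) (I q) = meetLen (J p) (J q) := by
  suffices h : ∀ q p : Fin (N + 1), p ≤ q → meetLen (I p) (I q) = meetLen (J p) (J q) by
    rcases le_total p q with hpq | hqp
    · exact h q p hpq
    · rw [meetLen_comm (I p), meetLen_comm (J p)]
      exact h p q hqp
  intro q
  induction q using WellFoundedLT.induction with
  | ind q ih =>
    intro p hpq
    rcases hpq.eq_or_lt with rfl | hpq
    · rw [meetLen_self, meetLen_self]
    obtain ⟨s, rfl⟩ := Fin.exists_succ_eq_of_ne_zero (Fin.ne_zero_of_lt hpq)
    have hρ := joinParent_lt J s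
    have hρp : meetLen (I p) (I (joinParent J s)) = meetLen (J p) (J (joinParent J s)) := by
      rcases le_total p (joinParent J s) with h | h
      · exact ih _ hρ p h
      · rw [meetLen_comm (I p), meetLen_comm (J p)]
        exact ih p hpq _ h
    rw [meetLen_eq_min_joinLevel I hpq, meetLen_eq_min_joinLevel J hpq, hl, hp, hρp]

end JoinLevel

lemma Finset.card_image_eq_card_filter_forall_lt_ne {ι β : Type*} [Fintype ι] [LinearOrder ι]
    [DecidableEq β] (f : ι → β) : #(univ.image f) = #{s | ∀ r < s, f r ≠ f s} := by
  have hinj : Set.InjOn f ↑(univ.filter fun s => ∀ r < s, f r ≠ f s) := by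
    intro a ha b hb hab
    simp only [coe_filter, mem_univ, true_and, Set.mem_ofPred_eq] at ha hb
    rcases lt_trichotomy a b with h | h | h
    · exact absurd hab (hb a h)
    · exact h
    · exact absurd hab.symm (ha b h)
  rw [← card_image_of_injOn hinj]
  congr 1
  refine (image_subset_image (filter_subset _ _)).antisymm' fun b hb => ?_
  obtain ⟨s, -, rfl⟩ := mem_image.1 hb
  obtain ⟨s₀, hs₀, hmin⟩ := exists_min_image {r | f r = f s} id ⟨s, by simp⟩
  simp only [mem_filter, mem_univ, true_and, id] at hs₀ hmin
  refine mem_image.2 ⟨s₀, ?_, hs₀⟩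
  simp only [mem_filter, mem_univ, true_and]
  exact fun r hr hfr => absurd hr (not_lt.2 (hmin r (hfr.trans hs₀)))

section JoinMult
variable {m k N : ℕ}

lemma prefixCount_eq (J : Fin (N + 1) → Fin k → Fin m) {w : ℕ} (hw : w ≤ k) :
    prefixCount J w = #{s | joinLevel J s < w} + 1 := by
  rw [prefixCount, card_image_eq_card_filter_forall_lt_ne, Fin.card_filter_univ_succ,
    if_pos fun r hr => absurd hr (Fin.not_lt_zero r)]
  congr 2
  ext s
  simp only [joinLevel_lt_iff, ne_eq, take_ofFn_eq_iff hw, not_le]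

lemma card_filter_joinLevel_lt_succ (J : Fin (N + 1) → Fin k → Fin m) (v : ℕ) :
    #{s | joinLevel J s < v + 1} = #{s | joinLevel J s < v} + #{s | joinLevel J s = v} := by
  rw [← card_union_of_disjoint (disjoint_filter.2 fun _ _ h₁ h₂ => h₁.ne h₂), ← filter_or]
  simp only [Nat.lt_succ_iff_lt_or_eq]

lemma joinMult_eq_card (J : Fin (N + 1) → Fin k → Fin m) (v : ℕ) :
    joinMult J v = #{s | joinLevel J s = v} := by
  have hk : #{s | joinLevel J s < k + 1} = N := by
    rw [filter_true_of_mem fun s _ => Nat.lt_succ_of_le (joinLevel_le J s), card_univ,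
      Fintype.card_fin]
  unfold joinMult
  split_ifs with hvk hvk'
  · rw [prefixCount_eq J hvk, prefixCount_eq J hvk.le, card_filter_joinLevel_lt_succ]
    omega
  · subst hvk'
    rw [prefixCount_eq J le_rfl]
    have := card_filter_joinLevel_lt_succ J v
    omega
  · refine (card_eq_zero.2 (filter_eq_empty_iff.2 fun s _ => ?_)).symm
    have := joinLevel_le J s
    omega

end JoinMult

lemma Set.ncard_image_le_ncard_image_of_factor {α β γ : Type*} [Finite γ] {s : Set α}
    {f : α → β} {g : α → γ} (h : ∀ x ∈ s, ∀ y ∈ s, g x = g y → f x = f y) :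
    (f '' s).ncard ≤ (g '' s).ncard := by
  rcases s.eq_empty_or_nonempty with rfl | ⟨x₀, -⟩
  · simp
  have : Nonempty α := ⟨x₀⟩
  have hfac : f '' s = (fun c => f (Function.invFunOn g s c)) '' (g '' s) := by
    ext b
    constructor
    · rintro ⟨x, hx, rfl⟩
      have hgx : ∃ y ∈ s, g y = g x := ⟨x, hx, rfl⟩
      exact ⟨g x, ⟨x, hx, rfl⟩,
        h _ (Function.invFunOn_pos hgx).1 _ hx (Function.invFunOn_eq hgx)⟩
    · rintro ⟨_, ⟨x, hx, rfl⟩, rfl⟩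
      exact ⟨_, (Function.invFunOn_pos ⟨x, hx, rfl⟩).1, rfl⟩
  rw [hfac]
  exact Set.ncard_image_le (Set.toFinite _)

lemma Finset.univ_val_map_eq_of_card_filter_eq {ι α : Type*} [Fintype ι] [DecidableEq α]
    {f g : ι → α} (h : ∀ a, #{i | f i = a} = #{i | g i = a}) :
    univ.val.map f = univ.val.map g :=
  Multiset.ext.2 fun a => by
    simp only [Multiset.count_map, ← filter_val, eq_comm (a := a)]
    exact h a

section Encoding
variable {m k N : ℕ}

def parentMaps (N : ℕ) : Finset (Fin N → Fin (N + 1)) :=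
  Fintype.piFinset fun s => Iio s.succ

lemma card_parentMaps (N : ℕ) : #(parentMaps N) = N ! := by
  simp only [parentMaps, Fintype.card_piFinset, Fin.card_Iio, Fin.val_succ,
    Fin.prod_univ_eq_prod_range (· + 1), prod_range_add_one_eq_factorial]

def levelsWith (l : Fin N → Fin (k + 1)) : Finset (Fin N → Fin (k + 1)) :=
  univ.filter fun a => univ.val.map a = univ.val.map l

def levelVec (J : Fin (N + 1) → Fin k → Fin m) (s : Fin N) : Fin (k + 1) :=
  ⟨joinLevel J s, Nat.lt_succ_of_le (joinLevel_le J s)⟩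

lemma levelVec_mem_levelsWith {J : Fin (N + 1) → Fin k → Fin m} {l : Fin N → Fin (k + 1)}
    (hJ : ∀ a, joinMult J a = #{t | (l t : ℕ) = a}) : levelVec J ∈ levelsWith l := by
  refine mem_filter.2 ⟨mem_univ _, Multiset.map_injective Fin.val_injective ?_⟩
  simp only [Multiset.map_map]
  exact univ_val_map_eq_of_card_filter_eq fun a => (joinMult_eq_card J a).symm.trans (hJ a)

lemma numClasses_le (l : Fin N → Fin (k + 1)) :
    numClasses m k (N + 1) (fun t => (l t : ℕ)) ≤ N ! * #(levelsWith l) := by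
  classical
  set T := {J : Fin (N + 1) → Fin k → Fin m | ∀ a, joinMult J a = #{t | (l t : ℕ) = a}}
  have hS : numClasses m k (N + 1) (fun t => (l t : ℕ)) = (orbitV [] '' T).ncard := by
    rw [numClasses]
    congr 1
    ext C
    exact ⟨fun ⟨J, hC, hJ⟩ => ⟨J, hJ, hC.symm⟩, fun ⟨J, hJ, hC⟩ => ⟨J, hC.symm, hJ⟩⟩
  have hfac : ∀ I ∈ T, ∀ J ∈ T, (joinParent I, levelVec I) = (joinParent J, levelVec J) →
      orbitV [] I = orbitV [] J := by
    intro I _ J _ h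
    simp only [Prod.mk.injEq] at h
    refine orbitV_nil_eq_of_meetLen_eq (meetLen_eq_of_joinLevel_eq ?_ h.1)
    ext s
    exact congrArg Fin.val (congrFun h.2 s)
  have hmaps : (fun J => (joinParent J, levelVec J)) '' T ⊆ ↑(parentMaps N ×ˢ levelsWith l) := by
    rintro _ ⟨J, hJ, rfl⟩
    exact mem_product.2 ⟨Fintype.mem_piFinset.2 fun s => mem_Iio.2 (joinParent_lt J s),
      levelVec_mem_levelsWith hJ⟩
  rw [hS, ← card_parentMaps, ← card_product, ← Set.ncard_coe_finset]
  exact (Set.ncard_image_le_ncard_image_of_factor hfac).trans (Set.ncard_le_ncard hmaps)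

end Encoding

lemma Monotone.eq_of_univ_val_map_eq {N : ℕ} {α : Type*} [LinearOrder α] {l l' : Fin N → α}
    (hl : Monotone l) (hl' : Monotone l') (h : univ.val.map l = univ.val.map l') : l = l' := by
  rw [Fin.univ_val_map, Fin.univ_val_map, Multiset.coe_eq_coe] at h
  exact List.ofFn_inj.1 (h.eq_of_sortedLE hl.sortedLE_ofFn hl'.sortedLE_ofFn)

section Levels
variable {k N : ℕ}

lemma sum_val_eq_of_mem_levelsWith {l a : Fin N → Fin (k + 1)} (ha : a ∈ levelsWith l) :
    ∑ s, (a s : ℕ) = ∑ s, (l s : ℕ) := by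
  have := congrArg (fun M => (M.map Fin.val).sum) (mem_filter.1 ha).2
  simpa only [Multiset.map_map, Function.comp_def, ← sum_eq_multiset_sum] using this

lemma numClasses_mul_pow_le {m : ℕ} (l : Fin N → Fin (k + 1)) {lam : ℝ} (hlam : 0 ≤ lam) :
    (numClasses m k (N + 1) (fun t => (l t : ℕ)) : ℝ) * lam ^ (∑ t, (l t : ℕ)) ≤
      N ! * ∑ a ∈ levelsWith l, lam ^ (∑ s, (a s : ℕ)) := by
  have hconst : ∑ a ∈ levelsWith l, lam ^ (∑ s, (a s : ℕ)) =
      #(levelsWith l) * lam ^ (∑ t, (l t : ℕ)) := by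
    rw [sum_congr rfl fun a ha => by rw [sum_val_eq_of_mem_levelsWith ha], sum_const,
      nsmul_eq_mul]
  rw [hconst, ← mul_assoc]
  gcongr
  exact_mod_cast numClasses_le l

lemma sum_sum_levelsWith_le {L : Finset (Fin N → Fin (k + 1))} (hL : ∀ l ∈ L, Monotone l)
    (f : (Fin N → Fin (k + 1)) → ℝ) (hf : ∀ a, 0 ≤ f a) :
    ∑ l ∈ L, ∑ a ∈ levelsWith l, f a ≤ ∑ a, f a := by
  have hdisj : (L : Set (Fin N → Fin (k + 1))).PairwiseDisjoint levelsWith := by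
    intro l hl l' hl' hne
    refine disjoint_left.2 fun a ha ha' => hne ?_
    exact (hL l hl).eq_of_univ_val_map_eq (hL l' hl')
      ((mem_filter.1 ha).2.symm.trans (mem_filter.1 ha').2)
  rw [← sum_biUnion hdisj]
  exact sum_le_univ_sum_of_nonneg hf

lemma card_filter_sum_val_eq_le (r : ℕ) :
    #{a : Fin N → Fin (k + 1) | ∑ s, (a s : ℕ) = r} ≤ (r + 1) ^ (N - 1) := by
  cases N with
  | zero => exact (card_le_univ _).trans (by simp)
  | succ M =>
    have hinit : ∀ a ∈ ({a : Fin (M + 1) → Fin (k + 1) | ∑ s, (a s : ℕ) = r} : Finset _),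
        (fun i : Fin M => (a i.castSucc : ℕ)) ∈ Fintype.piFinset fun _ => range (r + 1) := by
      intro a ha
      refine Fintype.mem_piFinset.2 fun i => mem_range.2 (Nat.lt_succ_of_le ?_)
      rw [← (mem_filter.1 ha).2]
      exact single_le_sum (f := fun s => (a s : ℕ)) (fun _ _ => Nat.zero_le _) (mem_univ _)
    have hinj : Set.InjOn (fun a : Fin (M + 1) → Fin (k + 1) => fun i : Fin M =>
        (a i.castSucc : ℕ)) ↑({a : Fin (M + 1) → Fin (k + 1) | ∑ s, (a s : ℕ) = r} : Finset _) := by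
      intro a ha a' ha' h
      simp only [coe_filter, mem_univ, true_and, Set.mem_ofPred_eq, Fin.sum_univ_castSucc]
        at ha ha'
      have hinit : ∀ i : Fin M, a i.castSucc = a' i.castSucc := fun i =>
        Fin.ext (congrFun h i)
      have hlast : a (Fin.last M) = a' (Fin.last M) := by
        simp only [hinit] at ha
        exact Fin.ext (by omega)
      funext i
      exact Fin.lastCases hlast hinit i
    simpa using card_le_card_of_injOn _ hinit hinj

end Levels

section Series
variable {lam : ℝ}

lemma summable_add_one_pow_mul_geometric (p : ℕ) (hlam0 : 0 < lam) (hlam1 : lam < 1) :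
    Summable fun r : ℕ => ((r : ℝ) + 1) ^ p * lam ^ r := by
  have hnorm : ‖lam‖ < 1 := by rwa [Real.norm_of_nonneg hlam0.le]
  have h := (summable_nat_add_iff 1).2
    (summable_pow_mul_geometric_of_norm_lt_one (R := ℝ) p hnorm)
  refine (h.mul_left lam⁻¹).congr fun r => ?_
  push_cast
  field_simp
  ring

lemma sum_pow_sum_val_le_tsum {k N : ℕ} (hlam0 : 0 < lam) (hlam1 : lam < 1) :
    ∑ a : Fin N → Fin (k + 1), lam ^ (∑ s, (a s : ℕ)) ≤
      ∑' r : ℕ, ((r : ℝ) + 1) ^ (N - 1) * lam ^ r := by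
  rw [sum_comp (fun j => lam ^ j) fun a : Fin N → Fin (k + 1) => ∑ s, (a s : ℕ)]
  refine (sum_le_sum fun r _ => ?_).trans (Summable.sum_le_tsum _ (fun _ _ => by positivity)
    (summable_add_one_pow_mul_geometric (N - 1) hlam0 hlam1))
  rw [nsmul_eq_mul]
  gcongr
  exact_mod_cast card_filter_sum_val_eq_le r

end Series

theorem stmt_13_general {m : ℕ} (n : ℕ) (hn : 1 ≤ n)
    (lam : ℝ) (hlam0 : 0 < lam) (hlam1 : lam < 1) (k : ℕ) :
    ∑ l ∈ Finset.univ.filter (fun l : Fin (n - 1) → Fin (k + 1) =>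
        ∀ a b : Fin (n - 1), a ≤ b → l a ≤ l b),
      (numClasses m k n (fun t => (l t : ℕ)) : ℝ) * lam ^ (∑ t, (l t : ℕ))
    ≤ (Nat.factorial (n - 1) : ℝ) * ∑' r : ℕ, ((r : ℝ) + 1) ^ (n - 2) * lam ^ r := by
  obtain ⟨N, rfl⟩ : ∃ N, n = N + 1 := ⟨n - 1, by omega⟩
  calc _ ≤ ∑ l ∈ univ.filter (fun l : Fin N → Fin (k + 1) => Monotone l),
        N ! * ∑ a ∈ levelsWith l, lam ^ (∑ s, (a s : ℕ)) :=
      sum_le_sum fun l _ => numClasses_mul_pow_le l hlam0.le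
    _ ≤ N ! * ∑ a : Fin N → Fin (k + 1), lam ^ (∑ s, (a s : ℕ)) := by
      rw [← mul_sum]
      gcongr
      exact sum_sum_levelsWith_le (fun l hl => (mem_filter.1 hl).2) _ fun _ => by positivity
    _ ≤ N ! * ∑' r : ℕ, ((r : ℝ) + 1) ^ (N - 1) * lam ^ r := by
      gcongr
      exact sum_pow_sum_val_le_tsum hlam0 hlam1

/-- `∑_{0 ≤ l₁ ≤ ⋯ ≤ l_{n−1} ≤ k} N(l₁,…,l_{n−1}) λ^{l₁+⋯+l_{n−1}}
≤ (n−1)! ∑_{r=0}^∞ (r+1)^{n−2} λ^r`, a bound independent of `k`. -/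
theorem stmt_13 {m : ℕ} (hm : 2 ≤ m) (n : ℕ) (hn : 1 ≤ n)
    (lam : ℝ) (hlam0 : 0 < lam) (hlam1 : lam < 1) (k : ℕ) :
    ∑ l ∈ Finset.univ.filter (fun l : Fin (n - 1) → Fin (k + 1) =>
        ∀ a b : Fin (n - 1), a ≤ b → l a ≤ l b),
      (numClasses m k n (fun t => (l t : ℕ)) : ℝ) * lam ^ (∑ t, (l t : ℕ))
    ≤ (Nat.factorial (n - 1) : ℝ) * ∑' r : ℕ, ((r : ℝ) + 1) ^ (n - 2) * lam ^ r :=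
  stmt_13_general n hn lam hlam0 hlam1 k
end
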